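/- For X, Y ∈ ℝ^{d×d}, the identity ∫_0^1 e^{(1-α)X} Y e^{αX} dα = (∑_{n=0}^∞ {X,Y}_n / (n+1)!) · e^X holds, where {X,Y}_n denotes the n-fold iterated commutator. -/

import Mathlib

/-!
Writing `ad x = L_x - R_x` with the commuting operators of left and right multiplication by `x`
gives `exp (s • ad x) y = e^{s x} y e^{-s x}`, so the integrand is `exp ((1 - α) • ad x) y * e^x`.
Integrating the exponential series of `t • ad x` termwise over `[0, 1]` turns `t ^ n / n!`
into `1 / (n + 1)!`.
-/

open Matrix NormedSpace

attribute [local instance] Matrix.linftyOpNormedRing Matrix.linftyOpNormedAlgebra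

/-- The iterated commutator `{X,Y}ₙ`. -/
def itComm {d : ℕ} (X : Matrix (Fin d) (Fin d) ℝ) : Matrix (Fin d) (Fin d) ℝ → ℕ →
    Matrix (Fin d) (Fin d) ℝ
  | Y, 0 => Y
  | Y, n + 1 => X * itComm X Y n - itComm X Y n * X

section BanachAlgebra

variable {𝔸 : Type*} [NormedRing 𝔸] [NormedAlgebra ℝ 𝔸]

noncomputable def ad : 𝔸 →L[ℝ] 𝔸 →L[ℝ] 𝔸 :=
  ContinuousLinearMap.mul ℝ 𝔸 - (ContinuousLinearMap.mul ℝ 𝔸).flip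

-- The lemmas on `NormedSpace.exp` are stated for normed `ℚ`-algebras.
noncomputable abbrev normedAlgebraRatOfReal : NormedAlgebra ℚ 𝔸 := .restrictScalars ℚ ℝ 𝔸

attribute [local instance] normedAlgebraRatOfReal

noncomputable def mulLeftRingHom : 𝔸 →+* (𝔸 →L[ℝ] 𝔸) where
  toFun := ContinuousLinearMap.mul ℝ 𝔸
  map_one' := by ext; simp
  map_mul' x y := by ext; simp [mul_assoc]
  map_zero' := by simp
  map_add' := by simp

noncomputable def mulRightRingHom : 𝔸ᵐᵒᵖ →+* (𝔸 →L[ℝ] 𝔸) where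
  toFun x := (ContinuousLinearMap.mul ℝ 𝔸).flip x.unop
  map_one' := by ext; simp
  map_mul' x y := by ext; simp [mul_assoc]
  map_zero' := by simp
  map_add' := by simp

variable [CompleteSpace 𝔸]

lemma exp_continuousLinearMap_mul (x : 𝔸) :
    exp (ContinuousLinearMap.mul ℝ 𝔸 x) = ContinuousLinearMap.mul ℝ 𝔸 (exp x) :=
  (map_exp mulLeftRingHom (ContinuousLinearMap.mul ℝ 𝔸).continuous x).symm

lemma exp_continuousLinearMap_mul_flip (x : 𝔸) :
    exp ((ContinuousLinearMap.mul ℝ 𝔸).flip x) = (ContinuousLinearMap.mul ℝ 𝔸).flip (exp x) := by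
  have := map_exp (mulRightRingHom (𝔸 := 𝔸))
    ((ContinuousLinearMap.mul ℝ 𝔸).flip.continuous.comp MulOpposite.continuous_unop)
    (MulOpposite.op x)
  simpa [mulRightRingHom] using this.symm

theorem exp_ad_apply (x y : 𝔸) : exp (ad x) y = exp x * y * exp (-x) := by
  have hcomm : Commute (ContinuousLinearMap.mul ℝ 𝔸 x) (-(ContinuousLinearMap.mul ℝ 𝔸).flip x) :=
    .neg_right <| ContinuousLinearMap.ext fun z => (mul_assoc x z x).symm
  rw [ad, _root_.sub_apply, sub_eq_add_neg, exp_add_of_commute hcomm,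
    ← map_neg, exp_continuousLinearMap_mul, exp_continuousLinearMap_mul_flip]
  simp [mul_assoc]

theorem hasSum_integral_exp_smul (a : 𝔸) :
    HasSum (fun n : ℕ => ((n + 1).factorial : ℝ)⁻¹ • a ^ n) (∫ t in (0 : ℝ)..1, exp (t • a)) := by
  have hterm (t : ℝ) (n : ℕ) :
      (n.factorial : ℝ)⁻¹ • (t • a) ^ n = t ^ n • ((n.factorial : ℝ)⁻¹ • a ^ n) := by
    rw [smul_pow, smul_comm]
  have hint (n : ℕ) :
      ∫ t in (0 : ℝ)..1, t ^ n • ((n.factorial : ℝ)⁻¹ • a ^ n) =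
        ((n + 1).factorial : ℝ)⁻¹ • a ^ n := by
    rw [intervalIntegral.integral_smul_const, integral_pow, smul_smul, Nat.factorial_succ]
    simp [field, mul_comm]
  simp_rw [← hint, ← hterm]
  refine intervalIntegral.hasSum_integral_of_dominated_convergence
    (fun n _ => ‖(n.factorial : ℝ)⁻¹ • a ^ n‖) (fun n => ?_) (fun n => ?_)
    (.of_forall fun _ _ => norm_expSeries_summable' a) intervalIntegrable_const
    (.of_forall fun t _ => exp_series_hasSum_exp' (t • a))
  · fun_prop
  · refine .of_forall fun t ht => ?_
    rw [hterm, norm_smul, norm_pow, Real.norm_eq_abs]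
    have ht' : |t| ≤ 1 := by
      rw [Set.uIoc_of_le zero_le_one] at ht
      exact abs_le.2 ⟨by linarith [ht.1], ht.2⟩
    exact mul_le_of_le_one_left (norm_nonneg _) (pow_le_one₀ (abs_nonneg t) ht')

lemma exp_sub_smul_mul_mul_exp_smul (α : ℝ) (x y : 𝔸) :
    exp ((1 - α) • x) * y * exp (α • x) = exp (ad ((1 - α) • x)) y * exp x := by
  have hcomm : Commute (-((1 - α) • x)) x := ((Commute.refl x).smul_left _).neg_left
  rw [exp_ad_apply, mul_assoc _ (exp _), ← exp_add_of_commute hcomm]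
  congr 3
  module

theorem integral_exp_sub_smul_mul_mul_exp_smul (x y : 𝔸) :
    ∫ α in (0 : ℝ)..1, exp ((1 - α) • x) * y * exp (α • x) =
      (∑' n : ℕ, ((n + 1).factorial : ℝ)⁻¹ • (ad x ^ n) y) * exp x := by
  have hcont : Continuous fun t : ℝ => exp (t • ad x) := by fun_prop
  calc ∫ α in (0 : ℝ)..1, exp ((1 - α) • x) * y * exp (α • x)
      = ∫ α in (0 : ℝ)..1, exp ((1 - α) • ad x) y * exp x := by
        simp_rw [exp_sub_smul_mul_mul_exp_smul, map_smul]
    _ = (∫ α in (0 : ℝ)..1, exp ((1 - α) • ad x) y) * exp x :=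
        ((ContinuousLinearMap.mul ℝ 𝔸).flip (exp x)).intervalIntegral_comp_comm
          ((by fun_prop : Continuous fun α : ℝ => exp ((1 - α) • ad x) y).intervalIntegrable _ _)
    _ = (∫ t in (0 : ℝ)..1, exp (t • ad x)) y * exp x := by
        rw [intervalIntegral.integral_comp_sub_left (fun t => exp (t • ad x) y),
          ContinuousLinearMap.intervalIntegral_apply (hcont.intervalIntegrable _ _)]
        norm_num
    _ = _ := by
        have hsum := (hasSum_integral_exp_smul (ad x)).mapL (ContinuousLinearMap.apply ℝ 𝔸 y)
        simp only [ContinuousLinearMap.apply_apply, _root_.smul_apply] at hsum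
        rw [hsum.tsum_eq]

end BanachAlgebra

lemma itComm_eq_ad_pow_apply {d : ℕ} (X Y : Matrix (Fin d) (Fin d) ℝ) (n : ℕ) :
    itComm X Y n = (ad X ^ n) Y := by
  induction n with
  | zero => rfl
  | succ n ih => rw [itComm, ih, pow_succ']; rfl

theorem integral_conj_exp_eq_series {d : ℕ} (X Y : Matrix (Fin d) (Fin d) ℝ) :
    ∫ α in (0:ℝ)..1, NormedSpace.exp ((1 - α) • X) * Y * NormedSpace.exp (α • X) =
      (∑' n : ℕ, ((Nat.factorial (n + 1) : ℝ))⁻¹ • itComm X Y n) * NormedSpace.exp X := by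
  simp_rw [itComm_eq_ad_pow_apply]
  exact integral_exp_sub_smul_mul_mul_exp_smul X Y
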